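/- Let k be a field of characteristic zero, R = k[ℏ] the polynomial ring, and A = FreeAlgebra R ℕ+ the free associative R-algebra on generators x_1, x_2, x_3, …. Let Δ : A → A⊗A be the unique R-algebra homomorphism with Δ(x_n) = x_n⊗1 + 1⊗x_n + Σ_{m=1}^{n−1} Σ_{k=1}^{m} ℏ^k binom(n−m+1, k) · x_{n−m} ⊗ P^{(k)}_m(x_*) for all n ≥ 1, and let Δ^op := τ∘Δ where τ is the flip of the two tensor factors. Then for every n ≥ 1: Δ(x_n) − Δ^op(x_n) lies in ℏ·(A⊗A), and moreover Δ(x_n) − Δ^op(x_n) ≡ ℏ · Σ_{ℓ=1}^{n−1} (ℓ+1)·(x_ℓ ⊗ x_{n−ℓ} − x_{n−ℓ} ⊗ x_ℓ) modulo ℏ²·(A⊗A). (This computes the semiclassical Lie cobracket δ(x_n) = Σ_{ℓ=1}^{n−1} (ℓ+1) x_ℓ ∧ x_{n−ℓ} on the free Lie algebra.) -/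

import Mathlib

open scoped TensorProduct
noncomputable section

variable (k : Type*) [Field k] [CharZero k]

/-- `R = k[ℏ]`. -/
abbrev Rh := Polynomial k

/-- `A = FreeAlgebra R ℕ+`, the free associative `R`-algebra on `x_1, x_2, x_3, …`. -/
abbrev FA := FreeAlgebra (Rh k) ℕ+

/-- The generator `x_n` for `n : ℕ+`. -/
def xg (n : ℕ+) : FA k := FreeAlgebra.ι (Rh k) n

/-- The generator `x_n` for `n : ℕ` with `n ≥ 1` (and `1` for `n = 0`, never used). -/
def xg' (n : ℕ) : FA k := if h : 0 < n then xg k ⟨n, h⟩ else 1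

/-- `P_t^{(s)}(x_*) := Σ_{j_1+⋯+j_s = t, j_i ≥ 1} x_{j_1}⋯x_{j_s}`. -/
def Pfa (t s : ℕ) : FA k :=
  ∑ c ∈ Finset.univ.filter (fun c : Composition t => c.length = s),
    (c.blocks.map (xg' k)).prod

/-- The coproduct `Δ : A → A ⊗ A`: the unique `R`-algebra homomorphism with
`Δ(x_n) = x_n⊗1 + 1⊗x_n + Σ_{m=1}^{n−1} Σ_{j=1}^{m} ℏ^j binom(n−m+1, j) ·
x_{n−m} ⊗ P^{(j)}_m(x_*)`. -/
def Dfa : FA k →ₐ[Rh k] (FA k ⊗[Rh k] FA k) :=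
  FreeAlgebra.lift (Rh k) fun n : ℕ+ =>
    xg k n ⊗ₜ[Rh k] 1 + 1 ⊗ₜ[Rh k] xg k n +
      ∑ m ∈ Finset.Icc 1 ((n : ℕ) - 1), ∑ j ∈ Finset.Icc 1 m,
        ((Polynomial.X : Rh k) ^ j * (((n : ℕ) - m + 1).choose j : Rh k)) •
          (xg' k ((n : ℕ) - m) ⊗ₜ[Rh k] Pfa k m j)

/-- The flip `τ : A ⊗ A → A ⊗ A`. -/
def flipT : FA k ⊗[Rh k] FA k →ₗ[Rh k] FA k ⊗[Rh k] FA k :=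
  (TensorProduct.comm (Rh k) (FA k) (FA k)).toLinearMap

set_option linter.unusedSectionVars false

lemma Pfa_one (m : ℕ) (hm : 0 < m) : Pfa k m 1 = xg' k m := by
  unfold Pfa
  have h : Finset.univ.filter (fun c : Composition m => c.length = 1)
      = {Composition.single m hm} := by
    ext c
    simp [← Composition.eq_single_iff_length hm, eq_comm]
  rw [h, Finset.sum_singleton, Composition.single_blocks]
  simp

/-- For every `n ≥ 1`, `Δ(x_n) − Δ^op(x_n)` is divisible by `ℏ`, and
modulo `ℏ²` it equals `ℏ · Σ_{ℓ=1}^{n−1} (ℓ+1)·(x_ℓ ⊗ x_{n−ℓ} − x_{n−ℓ} ⊗ x_ℓ)`: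
the semiclassical limit of `(Δ − Δ^op)/ℏ` is the Lie cobracket
`δ(x_n) = Σ_{ℓ=1}^{n−1} (ℓ+1) x_ℓ ∧ x_{n−ℓ}`. -/
theorem stmt10 (n : ℕ+) :
    (∃ y : FA k ⊗[Rh k] FA k,
      Dfa k (xg k n) - flipT k (Dfa k (xg k n)) = (Polynomial.X : Rh k) • y) ∧
    (∃ z : FA k ⊗[Rh k] FA k,
      Dfa k (xg k n) - flipT k (Dfa k (xg k n)) =
        (Polynomial.X : Rh k) •
          (∑ l ∈ Finset.Icc 1 ((n : ℕ) - 1), (l + 1) •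
            (xg' k l ⊗ₜ[Rh k] xg' k ((n : ℕ) - l) - xg' k ((n : ℕ) - l) ⊗ₜ[Rh k] xg' k l))
        + ((Polynomial.X : Rh k) ^ 2) • z) := by
  set N := (n : ℕ) with hN
  set X : Rh k := Polynomial.X with hX
  set w : ℕ → ℕ → FA k ⊗[Rh k] FA k := fun m j =>
    xg' k (N - m) ⊗ₜ[Rh k] Pfa k m j - Pfa k m j ⊗ₜ[Rh k] xg' k (N - m) with hw
  have hE : Dfa k (xg k n) - flipT k (Dfa k (xg k n)) =
      ∑ m ∈ Finset.Icc 1 (N - 1), ∑ j ∈ Finset.Icc 1 m,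
        (X ^ j * ((N - m + 1).choose j : Rh k)) • w m j := by
    have hS : Dfa k (xg k n) = xg k n ⊗ₜ[Rh k] 1 + 1 ⊗ₜ[Rh k] xg k n +
        ∑ m ∈ Finset.Icc 1 (N - 1), ∑ j ∈ Finset.Icc 1 m,
          (X ^ j * ((N - m + 1).choose j : Rh k)) •
            (xg' k (N - m) ⊗ₜ[Rh k] Pfa k m j) := by
      simp only [Dfa, xg, FreeAlgebra.lift_ι_apply]; rfl
    rw [hS]
    simp only [flipT, map_add, map_sum, map_smul, LinearEquiv.coe_coe,
      TensorProduct.comm_tmul]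
    rw [show ∀ a b s s' : FA k ⊗[Rh k] FA k, (a + b + s) - (b + a + s') = s - s' from
      fun a b s s' => by abel]
    refine (Finset.sum_sub_distrib (G := FA k ⊗[Rh k] FA k) _ _).symm.trans ?_
    refine Finset.sum_congr rfl fun m hm => ?_
    refine (Finset.sum_sub_distrib (G := FA k ⊗[Rh k] FA k) _ _).symm.trans ?_
    exact Finset.sum_congr rfl fun j hj => (smul_sub (A := FA k ⊗[Rh k] FA k) _ _ _).symm
  constructor
  · refine ⟨∑ m ∈ Finset.Icc 1 (N - 1), ∑ j ∈ Finset.Icc 1 m,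
      (X ^ (j - 1) * ((N - m + 1).choose j : Rh k)) • w m j, ?_⟩
    rw [hE, Finset.smul_sum]
    refine Finset.sum_congr rfl fun m hm => ?_
    rw [Finset.smul_sum]
    refine Finset.sum_congr rfl fun j hj => ?_
    have hj1 : 1 ≤ j := (Finset.mem_Icc.mp hj).1
    have hp : X ^ j = X * X ^ (j - 1) := by
      rw [← pow_succ']; congr 1; omega
    rw [smul_smul, ← mul_assoc, ← hp]
  · refine ⟨∑ m ∈ Finset.Icc 1 (N - 1), ∑ j ∈ Finset.Icc 2 m,
      (X ^ (j - 2) * ((N - m + 1).choose j : Rh k)) • w m j, ?_⟩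
    rw [hE]
    have hsplit : ∀ m ∈ Finset.Icc 1 (N - 1),
        ∑ j ∈ Finset.Icc 1 m, (X ^ j * ((N - m + 1).choose j : Rh k)) • w m j =
        (X * ((N - m + 1 : ℕ) : Rh k)) • w m 1 +
          ∑ j ∈ Finset.Icc 2 m, (X ^ j * ((N - m + 1).choose j : Rh k)) • w m j := by
      intro m hm
      have hm1 : 1 ≤ m := (Finset.mem_Icc.mp hm).1
      have : Finset.Icc 1 m = insert 1 (Finset.Icc 2 m) := by
        ext j; simp [Finset.mem_Icc, Finset.mem_insert]; omega
      rw [this, Finset.sum_insert (by simp)]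
      simp [Nat.choose_one_right]
    rw [Finset.sum_congr rfl hsplit, Finset.sum_add_distrib]
    congr 1
    · -- first sum = X • T
      rw [Finset.smul_sum]
      refine Finset.sum_nbij' (i := fun m => N - m) (j := fun l => N - l)
        ?_ ?_ ?_ ?_ ?_
      · intro m hm; simp only [Finset.mem_Icc] at *; omega
      · intro l hl; simp only [Finset.mem_Icc] at *; omega
      · intro m hm; simp only [Finset.mem_Icc] at hm; show N - (N - m) = m; omega
      · intro l hl; simp only [Finset.mem_Icc] at hl; show N - (N - l) = l; omega
      · intro m hm
        simp only [Finset.mem_Icc] at hm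
        have h1 : N - (N - m) = m := by omega
        have h2 : N - m + 1 = (N - m) + 1 := rfl
        rw [mul_smul, Nat.cast_smul_eq_nsmul, hw]
        simp only [h1]
        rw [Pfa_one k m hm.1]
    · -- second sum = X^2 • z
      rw [Finset.smul_sum]
      refine Finset.sum_congr rfl fun m hm => ?_
      rw [Finset.smul_sum]
      refine Finset.sum_congr rfl fun j hj => ?_
      have hj2 : 2 ≤ j := (Finset.mem_Icc.mp hj).1
      have hp : X ^ j = X ^ 2 * X ^ (j - 2) := by
        rw [← pow_add]; congr 1; omega
      rw [smul_smul, ← mul_assoc, ← hp]
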